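/- For 1/2 < μ < 2/3, every t ∈ ℝ and every unit vector e ∈ ℝⁿ (n ≥ 2), the weight ⟨x + e t⟩^{4μ−2} ⟨x − e t⟩^{2μ} belongs to A₂(ℝⁿ) with A₂ constant bounded independently of t. -/

import Mathlib

/-!
Put `s = 6μ - 2 ∈ (1, 2)` and `θ = (4μ - 2) / s ∈ (0, 1)`, so that the weight is
`⟨y + te⟩^(sθ) ⟨y - te⟩^(s(1 - θ))`. Hölder's inequality with exponents `1/θ` and `1/(1 - θ)`,
applied both to the average of the weight and to that of its inverse, bounds its A₂ product on a
ball by a geometric mean of the A₂ products of two translates of `⟨y⟩^s`.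

Since `0 < s < n`, `⟨y⟩^s` is an A₂ weight. On a ball `B(x, r)` with `4r² < ⟨x⟩²` it is comparable
to its value at the centre. On larger balls it is at most `(4r)^s`, while `⟨y⟩^(-s) ≤ ‖y‖^(-s)`, which
is locally integrable (as `s < n`) and homogeneous of degree `-s`, so its average over
`B(x, r) ⊆ B(0, 4r)` is `O(r^(-s))`. Translation invariance of Lebesgue measure makes the bound
uniform over translates, hence in `t`.
-/

open MeasureTheory Metric Module

section Holder

variable {α : Type*} [MeasurableSpace α] {μ : Measure α}

theorem setAverage_nonneg {f : α → ℝ} (hf : ∀ y, 0 ≤ f y) (s : Set α) :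
    0 ≤ ⨍ y in s, f y ∂μ :=
  integral_nonneg hf

theorem integral_rpow_mul_rpow_le {f g : α → ℝ} (hf₀ : 0 ≤ᵐ[μ] f) (hg₀ : 0 ≤ᵐ[μ] g)
    (hf : Integrable f μ) (hg : Integrable g μ) {p q : ℝ} (hp : 0 ≤ p) (hq : 0 ≤ q)
    (hpq : p + q = 1) :
    ∫ a, f a ^ p * g a ^ q ∂μ ≤ (∫ a, f a ∂μ) ^ p * (∫ a, g a ∂μ) ^ q := by
  have hF : 0 ≤ ∫ a, f a ∂μ := integral_nonneg_of_ae hf₀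
  have hG : 0 ≤ ∫ a, g a ∂μ := integral_nonneg_of_ae hg₀
  by_cases hfg : Integrable (fun a => f a ^ p * g a ^ q) μ
  swap
  · rw [integral_undef hfg]; positivity
  have hfg₀ : 0 ≤ᵐ[μ] fun a => f a ^ p * g a ^ q := by
    filter_upwards [hf₀, hg₀] with a ha hb
    exact mul_nonneg (Real.rpow_nonneg ha p) (Real.rpow_nonneg hb q)
  rw [← ENNReal.ofReal_le_ofReal_iff (by positivity), ofReal_integral_eq_lintegral_ofReal hfg hfg₀,
    ENNReal.ofReal_mul (by positivity), ← ENNReal.ofReal_rpow_of_nonneg hF hp,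
    ← ENNReal.ofReal_rpow_of_nonneg hG hq, ofReal_integral_eq_lintegral_ofReal hf hf₀,
    ofReal_integral_eq_lintegral_ofReal hg hg₀]
  calc ∫⁻ a, ENNReal.ofReal (f a ^ p * g a ^ q) ∂μ
      = ∫⁻ a, ENNReal.ofReal (f a) ^ p * ENNReal.ofReal (g a) ^ q ∂μ := by
        refine lintegral_congr_ae ?_
        filter_upwards [hf₀, hg₀] with a ha hb
        rw [ENNReal.ofReal_mul (Real.rpow_nonneg ha p), ENNReal.ofReal_rpow_of_nonneg ha hp,
          ENNReal.ofReal_rpow_of_nonneg hb hq]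
    _ ≤ _ := ENNReal.lintegral_mul_norm_pow_le hf.aemeasurable.ennreal_ofReal
        hg.aemeasurable.ennreal_ofReal hp hq hpq

theorem average_rpow_mul_rpow_le {f g : α → ℝ} (hf₀ : 0 ≤ᵐ[μ] f) (hg₀ : 0 ≤ᵐ[μ] g)
    (hf : Integrable f μ) (hg : Integrable g μ) {p q : ℝ} (hp : 0 ≤ p) (hq : 0 ≤ q)
    (hpq : p + q = 1) :
    ⨍ a, f a ^ p * g a ^ q ∂μ ≤ (⨍ a, f a ∂μ) ^ p * (⨍ a, g a ∂μ) ^ q :=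
  integral_rpow_mul_rpow_le (Measure.ae_smul_measure hf₀ _) (Measure.ae_smul_measure hg₀ _)
    hf.to_average hg.to_average hp hq hpq

end Holder

section BallA2Product

variable {E : Type*} [NormedAddCommGroup E] [MeasurableSpace E]

/-- `w` is an A₂ weight iff this is bounded over all balls; the supremum is its A₂ constant. -/
noncomputable def ballA2Product (μ : Measure E) (w : E → ℝ) (x : E) (r : ℝ) : ℝ :=
  (⨍ y in ball x r, w y ∂μ) * ⨍ y in ball x r, (w y)⁻¹ ∂μ

variable {μ : Measure E}

theorem ballA2Product_nonneg {w : E → ℝ} (hw : ∀ y, 0 ≤ w y) (x : E) (r : ℝ) :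
    0 ≤ ballA2Product μ w x r :=
  mul_nonneg (setAverage_nonneg hw _) (setAverage_nonneg (fun y => inv_nonneg.2 (hw y)) _)

theorem setAverage_ball_comp_sub [BorelSpace E] [μ.IsAddRightInvariant] (f : E → ℝ)
    (z x : E) (r : ℝ) :
    ⨍ y in ball x r, f (y - z) ∂μ = ⨍ y in ball (x - z) r, f y ∂μ := by
  have hmp := measurePreserving_sub_right μ z
  have hpre : (fun y => y - z) ⁻¹' ball (x - z) r = ball x r := by
    ext y; simp [dist_eq_norm]
  rw [setAverage_eq, setAverage_eq, measureReal_def, measureReal_def, ← hpre,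
    hmp.measure_preimage measurableSet_ball.nullMeasurableSet,
    hmp.setIntegral_preimage_emb (MeasurableEquiv.subRight z).measurableEmbedding]

theorem ballA2Product_comp_sub [BorelSpace E] [μ.IsAddRightInvariant] (w : E → ℝ)
    (z x : E) (r : ℝ) :
    ballA2Product μ (fun y => w (y - z)) x r = ballA2Product μ w (x - z) r := by
  simp only [ballA2Product, setAverage_ball_comp_sub (μ := μ) w,
    setAverage_ball_comp_sub (μ := μ) (fun y => (w y)⁻¹)]

theorem setAverage_ball_le_of_forall_le [ProperSpace E] [μ.IsOpenPosMeasure]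
    [IsFiniteMeasureOnCompacts μ] {f : E → ℝ} {x : E} {r M : ℝ} (hf : LocallyIntegrable f μ)
    (hr : 0 < r) (h : ∀ y ∈ ball x r, f y ≤ M) :
    ⨍ y in ball x r, f y ∂μ ≤ M := by
  obtain ⟨y, hy, hle⟩ := exists_setAverage_le (measure_ball_pos μ x hr).ne'
    measure_ball_lt_top.ne
    ((hf.integrableOn_isCompact (isCompact_closedBall x r)).mono_set ball_subset_closedBall)
  exact hle.trans (h y hy)

theorem ballA2Product_rpow_mul_rpow_le [ProperSpace E] {u v : E → ℝ}
    (hu₀ : ∀ y, 0 ≤ u y) (hv₀ : ∀ y, 0 ≤ v y) (hu : LocallyIntegrable u μ)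
    (hv : LocallyIntegrable v μ) (hu' : LocallyIntegrable (fun y => (u y)⁻¹) μ)
    (hv' : LocallyIntegrable (fun y => (v y)⁻¹) μ) {θ : ℝ} (hθ₀ : 0 ≤ θ) (hθ₁ : θ ≤ 1)
    (x : E) (r : ℝ) :
    ballA2Product μ (fun y => u y ^ θ * v y ^ (1 - θ)) x r ≤
      ballA2Product μ u x r ^ θ * ballA2Product μ v x r ^ (1 - θ) := by
  have hpow₀ {a b : ℝ} (ha : 0 ≤ a) (hb : 0 ≤ b) : 0 ≤ a ^ θ * b ^ (1 - θ) :=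
    mul_nonneg (Real.rpow_nonneg ha θ) (Real.rpow_nonneg hb _)
  have holder {f g : E → ℝ} (hf₀ : ∀ y, 0 ≤ f y) (hg₀ : ∀ y, 0 ≤ g y)
      (hf : LocallyIntegrable f μ) (hg : LocallyIntegrable g μ) :
      ⨍ y in ball x r, f y ^ θ * g y ^ (1 - θ) ∂μ ≤
        (⨍ y in ball x r, f y ∂μ) ^ θ * (⨍ y in ball x r, g y ∂μ) ^ (1 - θ) :=
    average_rpow_mul_rpow_le (.of_forall hf₀) (.of_forall hg₀)
      ((hf.integrableOn_isCompact (isCompact_closedBall x r)).mono_set ball_subset_closedBall)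
      ((hg.integrableOn_isCompact (isCompact_closedBall x r)).mono_set ball_subset_closedBall)
      hθ₀ (sub_nonneg.2 hθ₁) (add_sub_cancel θ 1)
  have hu'₀ (y : E) : 0 ≤ (u y)⁻¹ := inv_nonneg.2 (hu₀ y)
  have hv'₀ (y : E) : 0 ≤ (v y)⁻¹ := inv_nonneg.2 (hv₀ y)
  have hinv (y : E) : (u y ^ θ * v y ^ (1 - θ))⁻¹ = (u y)⁻¹ ^ θ * (v y)⁻¹ ^ (1 - θ) := by
    rw [mul_inv, Real.inv_rpow (hu₀ y), Real.inv_rpow (hv₀ y)]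
  simp only [ballA2Product, hinv]
  calc _ ≤ ((⨍ y in ball x r, u y ∂μ) ^ θ * (⨍ y in ball x r, v y ∂μ) ^ (1 - θ)) *
        ((⨍ y in ball x r, (u y)⁻¹ ∂μ) ^ θ * (⨍ y in ball x r, (v y)⁻¹ ∂μ) ^ (1 - θ)) :=
        mul_le_mul (holder hu₀ hv₀ hu hv) (holder hu'₀ hv'₀ hu' hv')
          (setAverage_nonneg (fun y => hpow₀ (hu'₀ y) (hv'₀ y)) _)
          (hpow₀ (setAverage_nonneg hu₀ _) (setAverage_nonneg hv₀ _))
    _ = _ := by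
        rw [Real.mul_rpow (setAverage_nonneg hu₀ _) (setAverage_nonneg hu'₀ _),
          Real.mul_rpow (setAverage_nonneg hv₀ _) (setAverage_nonneg hv'₀ _)]
        ring

end BallA2Product

theorem sq_rpow_div_two {a : ℝ} (ha : 0 ≤ a) (s : ℝ) : (a ^ 2) ^ (s / 2) = a ^ s := by
  rw [Real.rpow_div_two_eq_sqrt s (sq_nonneg a), Real.sqrt_sq ha]

section BracketPow

variable {E : Type*} [NormedAddCommGroup E]

/-- `bracketPow s z y = ⟨y - z⟩ ^ s` for the Japanese bracket `⟨y⟩ = √(1 + ‖y‖²)`. -/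
noncomputable def bracketPow (s : ℝ) (z y : E) : ℝ := (1 + ‖y - z‖ ^ 2) ^ (s / 2)

theorem bracketPow_pos (s : ℝ) (z y : E) : 0 < bracketPow s z y :=
  Real.rpow_pos_of_pos (by positivity) _

theorem continuous_bracketPow (s : ℝ) (z : E) : Continuous (bracketPow s z) :=
  (continuous_const.add ((continuous_id.sub continuous_const).norm.pow 2)).rpow_const
    fun _ => Or.inl (add_pos_of_pos_of_nonneg one_pos (sq_nonneg _)).ne'

theorem bracketPow_rpow (s θ : ℝ) (z y : E) :
    bracketPow s z y ^ θ = bracketPow (s * θ) z y := by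
  rw [bracketPow, bracketPow, ← Real.rpow_mul (by positivity)]; ring_nf

theorem inv_bracketPow (s : ℝ) (z y : E) : (bracketPow s z y)⁻¹ = bracketPow (-s) z y := by
  rw [bracketPow, bracketPow, ← Real.rpow_neg (by positivity), neg_div]

theorem bracketPow_sub (s : ℝ) (z y : E) : bracketPow s z y = bracketPow s 0 (y - z) := by
  rw [bracketPow, bracketPow, sub_zero]

theorem bracketPow_le_mul_of_le {s c : ℝ} (hs : 0 ≤ s) (hc : 0 ≤ c) {x y : E}
    (h : 1 + ‖y‖ ^ 2 ≤ c * (1 + ‖x‖ ^ 2)) :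
    bracketPow s 0 y ≤ c ^ (s / 2) * bracketPow s 0 x := by
  simp only [bracketPow, sub_zero]
  rw [← Real.mul_rpow hc (by positivity)]
  exact Real.rpow_le_rpow (by positivity) h (by positivity)

theorem inv_bracketPow_le_norm_rpow_neg {s : ℝ} (hs : 0 ≤ s) {y : E} (hy : y ≠ 0) :
    (bracketPow s 0 y)⁻¹ ≤ ‖y‖ ^ (-s) := by
  rw [Real.rpow_neg (norm_nonneg y)]
  refine inv_anti₀ (Real.rpow_pos_of_pos (norm_pos_iff.2 hy) s) ?_
  rw [bracketPow, sub_zero, ← sq_rpow_div_two (norm_nonneg y)]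
  exact Real.rpow_le_rpow (sq_nonneg _) (le_add_of_nonneg_left zero_le_one) (by positivity)

theorem one_add_sq_norm_le_four_mul_of_mem_ball {x y : E} {r : ℝ}
    (hx : 4 * r ^ 2 < 1 + ‖x‖ ^ 2) (hy : y ∈ ball x r) :
    1 + ‖y‖ ^ 2 ≤ 4 * (1 + ‖x‖ ^ 2) ∧ 1 + ‖x‖ ^ 2 ≤ 4 * (1 + ‖y‖ ^ 2) := by
  rw [mem_ball, dist_eq_norm] at hy
  have hd : ‖y - x‖ ^ 2 ≤ r ^ 2 := pow_le_pow_left₀ (norm_nonneg _) hy.le 2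
  have h₁ : ‖y‖ ^ 2 ≤ (‖x‖ + ‖y - x‖) ^ 2 :=
    pow_le_pow_left₀ (norm_nonneg _) (norm_le_norm_add_norm_sub' y x) 2
  have h₂ : ‖x‖ ^ 2 ≤ (‖y‖ + ‖y - x‖) ^ 2 :=
    pow_le_pow_left₀ (norm_nonneg _) (norm_le_norm_add_norm_sub y x) 2
  constructor <;> nlinarith [sq_nonneg (‖x‖ - ‖y - x‖), sq_nonneg (‖y‖ - ‖y - x‖)]

theorem one_add_sq_norm_le_of_mem_ball {x y : E} {r : ℝ}
    (hx : 1 + ‖x‖ ^ 2 ≤ 4 * r ^ 2) (hy : y ∈ ball x r) :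
    1 + ‖y‖ ^ 2 ≤ (4 * r) ^ 2 := by
  rw [mem_ball, dist_eq_norm] at hy
  have hr : 0 < r := (norm_nonneg _).trans_lt hy
  have hx' : ‖x‖ ≤ 2 * r := abs_le_of_sq_le_sq' (by nlinarith) (by positivity) |>.2
  have h₁ : ‖y‖ ≤ 3 * r := by linarith [norm_le_norm_add_norm_sub' y x]
  nlinarith [norm_nonneg y]

end BracketPow

section AddHaar

variable {E : Type*} [NormedAddCommGroup E] [NormedSpace ℝ E] [FiniteDimensional ℝ E]
  [MeasurableSpace E] [BorelSpace E] {μ : Measure E} [μ.IsAddHaarMeasure]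

theorem locallyIntegrable_bracketPow (s : ℝ) (z : E) : LocallyIntegrable (bracketPow s z) μ :=
  (continuous_bracketPow s z).locallyIntegrable

theorem locallyIntegrable_inv_bracketPow (s : ℝ) (z : E) :
    LocallyIntegrable (fun y => (bracketPow s z y)⁻¹) μ := by
  simpa only [inv_bracketPow] using locallyIntegrable_bracketPow (μ := μ) (-s) z

variable (μ) in
theorem setIntegral_ball_zero_norm_rpow (s : ℝ) {R : ℝ} (hR : 0 < R) :
    ∫ y in ball (0 : E) R, ‖y‖ ^ s ∂μ =
      R ^ finrank ℝ E * R ^ s * ∫ y in ball (0 : E) 1, ‖y‖ ^ s ∂μ := by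
  have h := Measure.setIntegral_comp_smul_of_pos μ (fun y : E => ‖y‖ ^ s) (ball 0 1) hR
  simp only [norm_smul, Real.norm_of_nonneg hR.le, smul_unitBall_of_pos hR, smul_eq_mul,
    Real.mul_rpow hR.le (norm_nonneg _), integral_const_mul] at h
  have hRd : (0 : ℝ) < R ^ finrank ℝ E := pow_pos hR _
  field_simp at h
  rw [← h]; ring

theorem setAverage_inv_bracketPow_le {s : ℝ} (hs₀ : 0 ≤ s) (hs : s < finrank ℝ E) {x : E}
    {r : ℝ} (hr : 0 < r) (hx : 1 + ‖x‖ ^ 2 ≤ 4 * r ^ 2) :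
    ⨍ y in ball x r, (bracketPow s 0 y)⁻¹ ∂μ ≤
      4 ^ finrank ℝ E * ((∫ y in ball (0 : E) 1, ‖y‖ ^ (-s) ∂μ) / μ.real (ball 0 1)) *
        (4 * r) ^ (-s) := by
  have hd : 0 < finrank ℝ E := by exact_mod_cast hs₀.trans_lt hs
  have : Nontrivial E := Module.nontrivial_of_finrank_pos (R := ℝ) hd
  set ρ := 4 * r
  have hρ : 0 < ρ := by positivity
  have hsub : ball x r ⊆ ball 0 ρ := fun y hy => by
    have := one_add_sq_norm_le_of_mem_ball hx hy
    rw [mem_ball_zero_iff]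
    exact abs_lt_of_sq_lt_sq' (by linarith) hρ.le |>.2
  have hinv : IntegrableOn (fun y => (bracketPow s 0 y)⁻¹) (ball 0 ρ) μ :=
    ((locallyIntegrable_inv_bracketPow s 0).integrableOn_isCompact
      (isCompact_closedBall 0 ρ)).mono_set ball_subset_closedBall
  have hnorm : IntegrableOn (fun y : E => ‖y‖ ^ (-s)) (ball 0 ρ) μ :=
    integrableOn_ball_of_norm_le_rpow hd (C := 1) hs
      (.of_forall fun y => by rw [one_mul, Real.norm_of_nonneg (by positivity)])
      (continuous_norm.measurable.pow_const _).aestronglyMeasurable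
  have hle : ∫ y in ball x r, (bracketPow s 0 y)⁻¹ ∂μ ≤ ∫ y in ball (0 : E) ρ, ‖y‖ ^ (-s) ∂μ :=
    calc ∫ y in ball x r, (bracketPow s 0 y)⁻¹ ∂μ
        ≤ ∫ y in ball 0 ρ, (bracketPow s 0 y)⁻¹ ∂μ :=
          setIntegral_mono_set hinv (.of_forall fun y => (inv_pos.2 (bracketPow_pos s 0 y)).le)
            hsub.eventuallyLE
      _ ≤ ∫ y in ball 0 ρ, ‖y‖ ^ (-s) ∂μ :=
          setIntegral_mono_ae_restrict hinv hnorm (ae_restrict_of_ae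
            ((Measure.ae_ne μ 0).mono fun y hy => inv_bracketPow_le_norm_rpow_neg hs₀ hy))
  have hvol : μ.real (ball x r) = r ^ finrank ℝ E * μ.real (ball 0 1) := by
    rw [measureReal_def, measureReal_def, Measure.addHaar_ball_of_pos μ x hr, ENNReal.toReal_mul,
      ENNReal.toReal_ofReal (by positivity)]
  have hm : 0 < μ.real (ball (0 : E) 1) :=
    ENNReal.toReal_pos (measure_ball_pos μ 0 one_pos).ne' measure_ball_lt_top.ne
  rw [setAverage_eq, smul_eq_mul, hvol]
  calc _ ≤ (r ^ finrank ℝ E * μ.real (ball 0 1))⁻¹ * ∫ y in ball (0 : E) ρ, ‖y‖ ^ (-s) ∂μ := by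
        gcongr
    _ = _ := by
        rw [setIntegral_ball_zero_norm_rpow μ (-s) hρ]
        field_simp
        ring

theorem ballA2Product_bracketPow_le_of_lt {s : ℝ} (hs₀ : 0 ≤ s) {x : E} {r : ℝ} (hr : 0 < r)
    (hx : 4 * r ^ 2 < 1 + ‖x‖ ^ 2) :
    ballA2Product μ (bracketPow s 0) x r ≤ 4 ^ s := by
  set c : ℝ := 4 ^ (s / 2)
  have hw := bracketPow_pos s (0 : E) x
  have hup : ⨍ y in ball x r, bracketPow s 0 y ∂μ ≤ c * bracketPow s 0 x :=
    setAverage_ball_le_of_forall_le (locallyIntegrable_bracketPow s 0) hr fun y hy =>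
      bracketPow_le_mul_of_le hs₀ zero_le_four (one_add_sq_norm_le_four_mul_of_mem_ball hx hy).1
  have hdown : ⨍ y in ball x r, (bracketPow s 0 y)⁻¹ ∂μ ≤ c * (bracketPow s 0 x)⁻¹ :=
    setAverage_ball_le_of_forall_le (locallyIntegrable_inv_bracketPow s 0) hr fun y hy => by
      have := bracketPow_le_mul_of_le hs₀ zero_le_four
        (one_add_sq_norm_le_four_mul_of_mem_ball hx hy).2
      rw [inv_le_iff_one_le_mul₀ (bracketPow_pos s 0 y)]
      calc 1 = (bracketPow s 0 x)⁻¹ * bracketPow s 0 x := (inv_mul_cancel₀ hw.ne').symm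
        _ ≤ (bracketPow s 0 x)⁻¹ * (c * bracketPow s 0 y) := by gcongr
        _ = _ := by ring
  calc ballA2Product μ (bracketPow s 0) x r
      ≤ (c * bracketPow s 0 x) * (c * (bracketPow s 0 x)⁻¹) :=
        mul_le_mul hup hdown
          (setAverage_nonneg (fun y => (inv_pos.2 (bracketPow_pos s 0 y)).le) _) (by positivity)
    _ = 4 ^ s := by
        rw [mul_mul_mul_comm, mul_inv_cancel₀ hw.ne', mul_one, ← Real.rpow_add four_pos]
        ring_nf

theorem ballA2Product_bracketPow_le_of_le {s : ℝ} (hs₀ : 0 ≤ s) (hs : s < finrank ℝ E) {x : E}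
    {r : ℝ} (hr : 0 < r) (hx : 1 + ‖x‖ ^ 2 ≤ 4 * r ^ 2) :
    ballA2Product μ (bracketPow s 0) x r ≤
      4 ^ finrank ℝ E * ((∫ y in ball (0 : E) 1, ‖y‖ ^ (-s) ∂μ) / μ.real (ball 0 1)) := by
  have hup : ⨍ y in ball x r, bracketPow s 0 y ∂μ ≤ (4 * r) ^ s :=
    setAverage_ball_le_of_forall_le (locallyIntegrable_bracketPow s 0) hr fun y hy => by
      rw [bracketPow, sub_zero, ← sq_rpow_div_two (by positivity : (0 : ℝ) ≤ 4 * r)]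
      exact Real.rpow_le_rpow (by positivity) (one_add_sq_norm_le_of_mem_ball hx hy) (by positivity)
  calc ballA2Product μ (bracketPow s 0) x r
      ≤ (4 * r) ^ s * (4 ^ finrank ℝ E *
          ((∫ y in ball (0 : E) 1, ‖y‖ ^ (-s) ∂μ) / μ.real (ball 0 1)) * (4 * r) ^ (-s)) :=
        mul_le_mul hup (setAverage_inv_bracketPow_le hs₀ hs hr hx)
          (setAverage_nonneg (fun y => (inv_pos.2 (bracketPow_pos s 0 y)).le) _) (by positivity)
    _ = _ := by
        rw [Real.rpow_neg (by positivity)]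
        field_simp

theorem exists_ballA2Product_bracketPow_le {s : ℝ} (hs₀ : 0 ≤ s) (hs : s < finrank ℝ E) :
    ∃ C, ∀ (z x : E) (r : ℝ), 0 < r → ballA2Product μ (bracketPow s z) x r ≤ C := by
  refine ⟨max (4 ^ s) (4 ^ finrank ℝ E * ((∫ y in ball (0 : E) 1, ‖y‖ ^ (-s) ∂μ) /
    μ.real (ball 0 1))), fun z x r hr => ?_⟩
  rw [show bracketPow s z = fun y => bracketPow s 0 (y - z) from funext (bracketPow_sub s z),
    ballA2Product_comp_sub]
  rcases lt_or_ge (4 * r ^ 2) (1 + ‖x - z‖ ^ 2) with hx | hx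
  · exact (ballA2Product_bracketPow_le_of_lt hs₀ hr hx).trans (le_max_left _ _)
  · exact (ballA2Product_bracketPow_le_of_le hs₀ hs hr hx).trans (le_max_right _ _)

theorem exists_ballA2Product_bracketPow_interpolation_le {s : ℝ} (hs₀ : 0 ≤ s)
    (hs : s < finrank ℝ E) {θ : ℝ} (hθ₀ : 0 ≤ θ) (hθ₁ : θ ≤ 1) :
    ∃ C, ∀ (z₁ z₂ x : E) (r : ℝ), 0 < r →
      ballA2Product μ (fun y => bracketPow s z₁ y ^ θ * bracketPow s z₂ y ^ (1 - θ)) x r ≤ C := by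
  obtain ⟨C, hC⟩ := exists_ballA2Product_bracketPow_le (μ := μ) hs₀ hs
  have hw₀ (z y : E) : 0 ≤ bracketPow s z y := (bracketPow_pos s z y).le
  have hA₀ (z x : E) (r : ℝ) : 0 ≤ ballA2Product μ (bracketPow s z) x r :=
    ballA2Product_nonneg (hw₀ z) x r
  have hC₀ : 0 ≤ C := (hA₀ 0 0 1).trans (hC 0 0 1 one_pos)
  refine ⟨C, fun z₁ z₂ x r hr => ?_⟩
  calc _ ≤ ballA2Product μ (bracketPow s z₁) x r ^ θ *
        ballA2Product μ (bracketPow s z₂) x r ^ (1 - θ) :=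
        ballA2Product_rpow_mul_rpow_le (hw₀ z₁) (hw₀ z₂) (locallyIntegrable_bracketPow s z₁)
          (locallyIntegrable_bracketPow s z₂) (locallyIntegrable_inv_bracketPow s z₁)
          (locallyIntegrable_inv_bracketPow s z₂) hθ₀ hθ₁ x r
    _ ≤ C ^ θ * C ^ (1 - θ) :=
        mul_le_mul (Real.rpow_le_rpow (hA₀ z₁ x r) (hC z₁ x r hr) hθ₀)
          (Real.rpow_le_rpow (hA₀ z₂ x r) (hC z₂ x r hr) (sub_nonneg.2 hθ₁))
          (Real.rpow_nonneg (hA₀ z₂ x r) _) (Real.rpow_nonneg hC₀ _)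
    _ = C := by
        rw [← Real.rpow_add' hC₀ (by rw [add_sub_cancel]; exact one_ne_zero), add_sub_cancel,
          Real.rpow_one]

end AddHaar

theorem mixed_weight_A2_uniform_general (n : ℕ) (hn : 2 ≤ n) (μ : ℝ)
    (h1 : 1/2 < μ) (h2 : μ < 2/3)
    (e : EuclideanSpace ℝ (Fin n)) :
    ∃ C : ℝ, ∀ (t : ℝ) (x : EuclideanSpace ℝ (Fin n)) (r : ℝ), 0 < r →
      (⨍ y in Metric.ball x r,
          (1 + ‖y + t • e‖^2) ^ ((4*μ - 2)/2) * (1 + ‖y - t • e‖^2) ^ μ) *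
        (⨍ y in Metric.ball x r,
          ((1 + ‖y + t • e‖^2) ^ ((4*μ - 2)/2) * (1 + ‖y - t • e‖^2) ^ μ)⁻¹) ≤ C := by
  set s := 6 * μ - 2 with hs_def
  set θ := (4 * μ - 2) / s with hθ_def
  have hs : 0 < s := by linarith
  have hsθ : s * θ / 2 = (4 * μ - 2) / 2 := by rw [hθ_def, mul_div_cancel₀ _ hs.ne']
  have hsθ' : s * (1 - θ) / 2 = μ := by rw [hθ_def, mul_sub, mul_div_cancel₀ _ hs.ne']; ring
  have hsn : s < finrank ℝ (EuclideanSpace ℝ (Fin n)) := by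
    have : (2 : ℝ) ≤ n := by exact_mod_cast hn
    rw [finrank_euclideanSpace_fin]
    linarith
  obtain ⟨C, hC⟩ := exists_ballA2Product_bracketPow_interpolation_le (μ := volume) hs.le hsn
    (div_nonneg (by linarith) hs.le) ((div_le_one hs).2 (by linarith) : θ ≤ 1)
  refine ⟨C, fun t x r hr => ?_⟩
  have hw : (fun y => bracketPow s (-(t • e)) y ^ θ * bracketPow s (t • e) y ^ (1 - θ)) =
      fun y => (1 + ‖y + t • e‖^2) ^ ((4*μ - 2)/2) * (1 + ‖y - t • e‖^2) ^ μ := by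
    funext y
    rw [bracketPow_rpow, bracketPow_rpow, bracketPow, bracketPow, sub_neg_eq_add, hsθ, hsθ']
  have h := hC (-(t • e)) (t • e) x r hr
  rw [hw] at h
  exact h

/-- For `1/2 < μ < 2/3`, every `t ∈ ℝ` and unit vector `e ∈ ℝⁿ` (`n ≥ 2`), the
weight `⟨x+et⟩^{4μ−2} ⟨x−et⟩^{2μ}` belongs to `A₂(ℝⁿ)` with `A₂` constant
bounded independently of `t`.  Here `⟨y⟩^α = (1+‖y‖²)^{α/2}`. -/
theorem mixed_weight_A2_uniform (n : ℕ) (hn : 2 ≤ n) (μ : ℝ)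
    (h1 : 1/2 < μ) (h2 : μ < 2/3)
    (e : EuclideanSpace ℝ (Fin n)) (he : ‖e‖ = 1) :
    ∃ C : ℝ, ∀ (t : ℝ) (x : EuclideanSpace ℝ (Fin n)) (r : ℝ), 0 < r →
      (⨍ y in Metric.ball x r,
          (1 + ‖y + t • e‖^2) ^ ((4*μ - 2)/2) * (1 + ‖y - t • e‖^2) ^ μ) *
        (⨍ y in Metric.ball x r,
          ((1 + ‖y + t • e‖^2) ^ ((4*μ - 2)/2) * (1 + ‖y - t • e‖^2) ^ μ)⁻¹) ≤ C :=
  mixed_weight_A2_uniform_general n hn μ h1 h2 e
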